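/- arXiv:math/0006031 — 6 statements merged into one kernel-verified Lean document; each statement's English description precedes it below -/
import Mathlib

section
/- Let R > 0 and let {E_h} be a sequence of sets in 𝒰_R ⊆ ℝⁿ that is equibounded, i.e. there exists M > 0 with E_h ⊆ B(0,M) for every h. Then there exist a set E ∈ 𝒰_R and a subsequence {E_{h_j}} such that E_{h_j} →K E in the sense of Kuratowski and χ_{E_{h_j}} → χ_E in L¹(ℝⁿ). -/
open Set Metric MeasureTheory Filter Topology ENNReal NNReal

noncomputable section

abbrev En (n : ℕ) := EuclideanSpace ℝ (Fin n)

def sphereCond (n : ℕ) (R : ℝ) (E : Set (En n)) : Prop :=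
  ∀ p ∈ frontier E, ∃ p' p'' : En n, dist p p' = R ∧ dist p p'' = R ∧
    ball p' R ⊆ E ∧ ball p'' R ∩ E = ∅

def UR (n : ℕ) (R : ℝ) : Set (Set (En n)) :=
  {E | IsClosed E ∧ Bornology.IsBounded E ∧ sphereCond n R E}

def KConv {X : Type*} [MetricSpace X] (F : ℕ → Set X) (F₀ : Set X) : Prop :=
  (∀ (p : X) (φ : ℕ → ℕ) (x : ℕ → X), StrictMono φ → (∀ k, x k ∈ F (φ k)) →
    Tendsto x atTop (𝓝 p) → p ∈ F₀) ∧
  (∀ p ∈ F₀, ∃ x : ℕ → X, (∀ h, x h ∈ F h) ∧ Tendsto x atTop (𝓝 p))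

def L1Conv {n : ℕ} (F : ℕ → Set (En n)) (E : Set (En n)) : Prop :=
  Tendsto (fun h => ∫ x, |(F h).indicator (fun _ => (1:ℝ)) x - E.indicator (fun _ => (1:ℝ)) x|)
    atTop (𝓝 0)


/-!
Blaschke selection (the closed subsets of a compact set form a compact space for the Hausdorff
distance) gives a subsequence converging in Hausdorff distance, hence in the sense of Kuratowski,
to a closed set `E`. Every boundary point of `E` is a limit of boundary points of the `E_{h_j}`,
and a subsequence of their admissible centers converges; the limit balls are admissible balls
for `E`. A point of `E` missing from infinitely many `E_{h_j}` is again such a limit of boundary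
points, so an exterior ball of radius `R` touches `E` there. That ball fills a fixed fraction
`4⁻ⁿ` of every small ball around the point, so by the Lebesgue density theorem these points form
a null set; off it the indicators converge pointwise, and dominated convergence gives `L¹`
convergence.
-/

section Kuratowski

variable {X : Type*} [MetricSpace X] {F : ℕ → Set X} {E : Set X}

theorem KConv.comp (hF : KConv F E) {ψ : ℕ → ℕ} (hψ : StrictMono ψ) :
    KConv (fun k => F (ψ k)) E :=
  ⟨fun p φ x hφ hx hxp => hF.1 p (ψ ∘ φ) x (hψ.comp hφ) hx hxp, fun p hp =>
    let ⟨x, hx, hxp⟩ := hF.2 p hp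
    ⟨x ∘ ψ, fun k => hx (ψ k), hxp.comp hψ.tendsto_atTop⟩⟩

theorem KConv.eventually_notMem (hF : KConv F E) {x : X} (hx : x ∉ E) :
    ∀ᶠ j in atTop, x ∉ F j := by
  by_contra h
  obtain ⟨φ, hφ, hxF⟩ :=
    extraction_of_frequently_atTop (not_eventually.1 h |>.mono fun _ => not_not.1)
  exact hx (hF.1 x φ (fun _ => x) hφ hxF tendsto_const_nhds)

theorem KConv.ball_subset {c : ℕ → X} {q : X} {R : ℝ} (hF : KConv F E)
    (hc : Tendsto c atTop (𝓝 q)) (hball : ∀ k, ball (c k) R ⊆ F k) : ball q R ⊆ E := by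
  intro u hu
  by_contra huE
  obtain ⟨k, hk, hkF⟩ :=
    (((tendsto_const_nhds.dist hc).eventually_lt_const hu).and (hF.eventually_notMem huE)).exists
  exact hkF (hball k hk)

theorem KConv.ball_inter_eq_empty {c : ℕ → X} {q : X} {R : ℝ} (hF : KConv F E)
    (hc : Tendsto c atTop (𝓝 q)) (hball : ∀ k, ball (c k) R ∩ F k = ∅) :
    ball q R ∩ E = ∅ := by
  refine eq_empty_iff_forall_notMem.2 fun u ⟨hu, huE⟩ => ?_
  obtain ⟨y, hyF, hyu⟩ := hF.2 u huE
  obtain ⟨k, hk⟩ := ((hyu.dist hc).eventually_lt_const hu).exists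
  exact eq_empty_iff_forall_notMem.1 (hball k) (y k) ⟨hk, hyF k⟩

theorem kConv_of_tendsto_hausdorffEDist (hE : IsClosed E)
    (hlim : Tendsto (fun j => hausdorffEDist (F j) E) atTop (𝓝 0))
    (hfin : ∀ j, hausdorffEDist (F j) E ≠ ⊤) : KConv F E := by
  refine ⟨fun p φ x hφ hx hxp => ?_, fun p hp => ?_⟩
  · rw [← hE.closure_eq, mem_closure_iff_infEDist_zero]
    have hbound :
        Tendsto (fun k => hausdorffEDist (F (φ k)) E + edist p (x k)) atTop (𝓝 0) := by
      simpa using (hlim.comp hφ.tendsto_atTop).add ((tendsto_const_nhds (x := p)).edist hxp)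
    refine le_antisymm (ge_of_tendsto' hbound fun k => ?_) zero_le
    exact infEDist_le_infEDist_add_edist.trans
      (add_le_add_left (infEDist_le_hausdorffEDist_of_mem (hx k)) _)
  · -- `(0 : ℝ≥0∞)⁻¹ = ⊤`, so the slack is positive for every `j`
    have hnear : ∀ j, ∃ y ∈ F j, edist p y < hausdorffEDist (F j) E + (j : ℝ≥0∞)⁻¹ :=
      fun j => exists_edist_lt_of_hausdorffEDist_lt hp <| by
        rw [hausdorffEDist_comm]
        exact ENNReal.lt_add_right (hfin j) (ENNReal.inv_ne_zero.2 (natCast_ne_top j))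
    choose y hyF hyp using hnear
    refine ⟨y, hyF, tendsto_iff_edist_tendsto_0.2 ?_⟩
    have hbound := hlim.add ENNReal.tendsto_inv_nat_nhds_zero
    rw [add_zero] at hbound
    exact tendsto_of_tendsto_of_tendsto_of_le_of_le tendsto_const_nhds hbound
      (fun _ => zero_le) fun j => by rw [edist_comm]; exact (hyp j).le

theorem exists_subseq_tendsto_hausdorffEDist {K : Set X} (hK : IsCompact K)
    (hF : ∀ j, IsClosed (F j)) (hFK : ∀ j, F j ⊆ K) :
    ∃ E, IsClosed E ∧ E ⊆ K ∧ ∃ φ : ℕ → ℕ, StrictMono φ ∧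
      Tendsto (fun j => hausdorffEDist (F (φ j)) E) atTop (𝓝 0) ∧
      ∀ j, hausdorffEDist (F (φ j)) E ≠ ⊤ := by
  have : CompactSpace K := isCompact_iff_compactSpace.1 hK
  let C : ℕ → TopologicalSpace.Closeds K := fun j =>
    ⟨Subtype.val ⁻¹' F j, (hF j).preimage continuous_subtype_val⟩
  obtain ⟨L, -, ψ, hψ, hCL⟩ := isCompact_univ.tendsto_subseq fun j => mem_univ (C j)
  have hCF : ∀ j, Subtype.val '' (C j : Set K) = F j := fun j => by
    simp [C, Subtype.image_preimage_coe, inter_eq_right.2 (hFK j)]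
  have hlim : Tendsto (fun j => hausdorffEDist (F (ψ j)) (Subtype.val '' (L : Set K))) atTop
      (𝓝 0) := by
    refine (tendsto_iff_edist_tendsto_0.1 hCL).congr fun j => ?_
    rw [← hCF, hausdorffEDist_image isometry_subtype_coe]
    rfl
  obtain ⟨φ, hφ, hfin⟩ :=
    extraction_of_eventually_atTop (hlim.eventually_lt_const zero_lt_top)
  exact ⟨_, (L.isClosed.isCompact.image continuous_subtype_val).isClosed,
    image_subset_iff.2 fun x _ => x.2, ψ ∘ φ, hψ.comp hφ, hlim.comp hφ.tendsto_atTop,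
    fun j => (hfin j).ne⟩

theorem exists_subseq_tendsto_of_dist_eq [ProperSpace X] {w c : ℕ → X} {x : X} {R : ℝ}
    (hw : Tendsto w atTop (𝓝 x)) (hc : ∀ k, dist (w k) (c k) = R) :
    ∃ (q : X) (φ : ℕ → ℕ), StrictMono φ ∧ Tendsto (c ∘ φ) atTop (𝓝 q) ∧
      dist x q = R := by
  have hcR : ∀ k, c k ∈ cthickening R (range w) := fun k =>
    mem_cthickening_of_dist_le (c k) (w k) R _ (mem_range_self k) (by rw [dist_comm, hc])
  obtain ⟨q, -, φ, hφ, hcq⟩ :=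
    tendsto_subseq_of_bounded (isBounded_range_of_tendsto w hw).cthickening hcR
  have hdist := (hw.comp hφ.tendsto_atTop).dist hcq
  simp only [Function.comp_apply, hc] at hdist
  exact ⟨q, φ, hφ, hcq, tendsto_nhds_unique hdist tendsto_const_nhds⟩

end Kuratowski

section Frontier

variable {V : Type*} [NormedAddCommGroup V] [NormedSpace ℝ V] [FiniteDimensional ℝ V]
  {F : ℕ → Set V} {E : Set V}

theorem exists_tendsto_frontier {y z : ℕ → V} {p : V} (hy : ∀ k, y k ∈ F k)
    (hz : ∀ k, z k ∉ F k) (hyp : Tendsto y atTop (𝓝 p)) (hzp : Tendsto z atTop (𝓝 p)) :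
    ∃ w : ℕ → V, (∀ k, w k ∈ frontier (F k)) ∧ Tendsto w atTop (𝓝 p) := by
  have hfr : ∀ k, ∃ w ∈ frontier (F k), dist (y k) w ≤ dist (y k) (z k) := fun k => by
    obtain ⟨w, hw, hd⟩ := exists_mem_frontier_infDist_compl_eq_dist (hy k)
      (ne_univ_iff_exists_notMem _ |>.2 ⟨z k, hz k⟩)
    exact ⟨w, hw, hd ▸ infDist_le_dist_of_mem (hz k)⟩
  choose w hw hwy using hfr
  refine ⟨w, hw, tendsto_iff_dist_tendsto_zero.2 <|
    squeeze_zero (g := fun k => dist (y k) (z k) + dist (y k) p)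
      (fun _ => dist_nonneg) (fun k => ?_) ?_⟩
  · calc dist (w k) p ≤ dist (y k) (w k) + dist (y k) p := dist_triangle_left _ _ _
      _ ≤ dist (y k) (z k) + dist (y k) p := by gcongr; exact hwy k
  · simpa using (hyp.dist hzp).add (tendsto_iff_dist_tendsto_zero.1 hyp)

theorem KConv.exists_tendsto_frontier_of_mem_frontier (hF : KConv F E) (hE : IsClosed E) {p : V}
    (hp : p ∈ frontier E) : ∃ ψ : ℕ → ℕ, StrictMono ψ ∧
      ∃ w : ℕ → V, (∀ k, w k ∈ frontier (F (ψ k))) ∧ Tendsto w atTop (𝓝 p) := by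
  obtain ⟨z, hzE, hzp⟩ :=
    mem_closure_iff_seq_limit.1 (frontier_subset_closure (frontier_compl E ▸ hp))
  obtain ⟨y, hyF, hyp⟩ := hF.2 p (hE.frontier_subset hp)
  obtain ⟨ψ, hψ, hzF⟩ := extraction_forall_of_eventually fun k => hF.eventually_notMem (hzE k)
  exact ⟨ψ, hψ,
    exists_tendsto_frontier (fun k => hyF (ψ k)) hzF (hyp.comp hψ.tendsto_atTop) hzp⟩

theorem KConv.exists_tendsto_frontier_of_frequently_notMem (hF : KConv F E) {p : V} (hp : p ∈ E)
    (hpF : ∃ᶠ j in atTop, p ∉ F j) : ∃ ψ : ℕ → ℕ, StrictMono ψ ∧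
      ∃ w : ℕ → V, (∀ k, w k ∈ frontier (F (ψ k))) ∧ Tendsto w atTop (𝓝 p) := by
  obtain ⟨y, hyF, hyp⟩ := hF.2 p hp
  obtain ⟨ψ, hψ, hpψ⟩ := extraction_of_frequently_atTop hpF
  exact ⟨ψ, hψ, exists_tendsto_frontier (fun k => hyF (ψ k)) hpψ (hyp.comp hψ.tendsto_atTop)
    tendsto_const_nhds⟩

end Frontier

def exteriorContactSet {X : Type*} [MetricSpace X] (E : Set X) (R : ℝ) : Set X :=
  {x ∈ E | ∃ q, dist x q = R ∧ ball q R ∩ E = ∅}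

section SphereCondition

variable {n : ℕ} {R : ℝ} {F : ℕ → Set (En n)} {E : Set (En n)}

theorem KConv.exists_admissible_centers (hF : KConv F E) (hsc : ∀ k, sphereCond n R (F k))
    {w : ℕ → En n} {x : En n} (hw : ∀ k, w k ∈ frontier (F k))
    (hwx : Tendsto w atTop (𝓝 x)) :
    ∃ p' p'' : En n, dist x p' = R ∧ dist x p'' = R ∧
      ball p' R ⊆ E ∧ ball p'' R ∩ E = ∅ := by
  choose c c' hc hc' hcF hc'F using fun k => hsc k (w k) (hw k)
  obtain ⟨q, φ, hφ, hcq, hq⟩ := exists_subseq_tendsto_of_dist_eq hwx hc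
  obtain ⟨q', φ', hφ', hcq', hq'⟩ := exists_subseq_tendsto_of_dist_eq hwx hc'
  exact ⟨q, q', hq, hq', (hF.comp hφ).ball_subset hcq fun k => hcF (φ k),
    (hF.comp hφ').ball_inter_eq_empty hcq' fun k => hc'F (φ' k)⟩

theorem KConv.sphereCond_of_forall (hF : KConv F E) (hE : IsClosed E)
    (hsc : ∀ j, sphereCond n R (F j)) : sphereCond n R E := fun _ hp =>
  let ⟨ψ, hψ, _, hw, hwp⟩ := hF.exists_tendsto_frontier_of_mem_frontier hE hp
  (hF.comp hψ).exists_admissible_centers (fun k => hsc (ψ k)) hw hwp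

theorem KConv.eventually_mem_iff (hF : KConv F E) (hsc : ∀ j, sphereCond n R (F j)) {x : En n}
    (hx : x ∉ exteriorContactSet E R) : ∀ᶠ j in atTop, (x ∈ F j ↔ x ∈ E) := by
  by_cases hxE : x ∈ E
  · have hxF : ∀ᶠ j in atTop, x ∈ F j := by
      by_contra h
      obtain ⟨ψ, hψ, w, hw, hwx⟩ :=
        hF.exists_tendsto_frontier_of_frequently_notMem hxE (not_eventually.1 h)
      obtain ⟨-, q, -, hq, -, hqE⟩ :=
        (hF.comp hψ).exists_admissible_centers (fun k => hsc (ψ k)) hw hwx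
      exact hx ⟨hxE, q, hq, hqE⟩
    exact hxF.mono fun _ hj => iff_of_true hj hxE
  · exact (hF.eventually_notMem hxE).mono fun _ hj => iff_of_false hj hxE

end SphereCondition

section Density

variable {V : Type*} [NormedAddCommGroup V] [NormedSpace ℝ V]

theorem exists_ball_subset_closedBall_inter_ball {x q : V} {R r : ℝ} (hx : dist x q = R)
    (hr : 0 < r) (hrR : r ≤ R) : ∃ m, ball m (r / 4) ⊆ closedBall x r ∩ ball q R := by
  have hR : 0 < R := hr.trans_le hrR
  have hrR' : r / (2 * R) ≤ 1 := by rw [div_le_one (by positivity)]; linarith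
  set m := AffineMap.lineMap x q (r / (2 * R))
  have hmx : dist m x = r / 2 := by
    rw [dist_lineMap_left, hx, Real.norm_of_nonneg (by positivity)]
    field_simp
  have hmq : dist m q = R - r / 2 := by
    rw [dist_lineMap_right, hx, Real.norm_of_nonneg (by linarith)]
    field_simp
  refine ⟨m, fun y hy => ⟨?_, ?_⟩⟩
  · calc dist y x ≤ dist y m + dist m x := dist_triangle _ _ _
      _ ≤ r := by rw [hmx]; linarith [mem_ball.1 hy]
  · calc dist y q ≤ dist y m + dist m q := dist_triangle _ _ _
      _ < R := by rw [hmq]; linarith [mem_ball.1 hy]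

variable [FiniteDimensional ℝ V] [MeasurableSpace V] [BorelSpace V] (μ : Measure V)
  [μ.IsAddHaarMeasure]

theorem le_addHaar_ball_inter_closedBall {x q : V} {R r : ℝ} (hx : dist x q = R) (hr : 0 < r)
    (hrR : r ≤ R) :
    ENNReal.ofReal ((1 / 4) ^ Module.finrank ℝ V) * μ (closedBall x r) ≤
      μ (ball q R ∩ closedBall x r) := by
  obtain ⟨m, hm⟩ := exists_ball_subset_closedBall_inter_ball hx hr hrR
  calc ENNReal.ofReal ((1 / 4) ^ Module.finrank ℝ V) * μ (closedBall x r)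
      = μ (ball m (r / 4)) := by
        rw [Measure.addHaar_ball_of_pos μ m (by positivity), Measure.addHaar_closedBall μ x hr.le,
          ← mul_assoc, ← ENNReal.ofReal_mul (by positivity), ← mul_pow]
        congr 3
        ring
    _ ≤ μ (ball q R ∩ closedBall x r) := measure_mono (hm.trans (inter_comm _ _).subset)

theorem addHaar_exteriorContactSet {E : Set V} (hE : MeasurableSet E) {R : ℝ} (hR : 0 < R) :
    μ (exteriorContactSet E R) = 0 := by
  set κ := ENNReal.ofReal ((1 / 4) ^ Module.finrank ℝ V)
  have hκ : 0 < κ := ENNReal.ofReal_pos.2 (by positivity)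
  refine measure_mono_null ?_
    (ae_iff.1 (Besicovitch.ae_tendsto_measure_inter_div_of_measurableSet μ hE.compl))
  rintro x ⟨hxE, q, hxq, hqE⟩ hdens
  rw [indicator_of_notMem (not_not.2 hxE)] at hdens
  obtain ⟨r, hsmall, hr, hrR⟩ :=
    ((hdens.eventually (gt_mem_nhds hκ)).and (Ioc_mem_nhdsGT hR)).exists
  have hqE' : ball q R ⊆ Eᶜ :=
    subset_compl_iff_disjoint_right.2 (disjoint_iff_inter_eq_empty.2 hqE)
  refine hsmall.not_ge ((ENNReal.le_div_iff_mul_le (Or.inl (measure_closedBall_pos μ x hr).ne')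
    (Or.inl measure_closedBall_lt_top.ne)).2 ?_)
  exact (le_addHaar_ball_inter_closedBall μ hxq hr hrR).trans
    (measure_mono (inter_subset_inter_left _ hqE'))

end Density

theorem l1Conv_of_ae_eventually_mem_iff {n : ℕ} {F : ℕ → Set (En n)} {E K : Set (En n)}
    (hF : ∀ j, MeasurableSet (F j)) (hE : MeasurableSet E) (hK : MeasurableSet K)
    (hKfin : volume K ≠ ∞) (hFK : ∀ j, F j ⊆ K) (hEK : E ⊆ K)
    (hlim : ∀ᵐ x, ∀ᶠ j in atTop, (x ∈ F j ↔ x ∈ E)) : L1Conv F E := by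
  have hbound : Integrable (K.indicator fun _ => (1 : ℝ)) :=
    (integrable_indicator_iff hK).2 (integrableOn_const hKfin)
  have hdom : ∀ j x,
      ‖|(F j).indicator (fun _ => (1 : ℝ)) x - E.indicator (fun _ => 1) x|‖ ≤
        K.indicator (fun _ => 1) x := fun j x => by
    by_cases hxK : x ∈ K
    · by_cases hxF : x ∈ F j <;> by_cases hxE : x ∈ E <;> simp [hxK, hxF, hxE]
    · rw [indicator_of_notMem hxK, indicator_of_notMem fun h => hxK (hFK j h),
        indicator_of_notMem fun h => hxK (hEK h)]
      simp
  have hpt : ∀ᵐ x, Tendsto (fun j => |(F j).indicator (fun _ => (1 : ℝ)) x -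
      E.indicator (fun _ => 1) x|) atTop (𝓝 0) := by
    filter_upwards [hlim] with x hx
    refine tendsto_const_nhds.congr' (hx.mono fun j hj => ?_)
    by_cases hxE : x ∈ E <;> simp [hxE, hj]
  unfold L1Conv
  simpa using tendsto_integral_of_dominated_convergence _
    (fun j => (((measurable_const.indicator (hF j)).sub
      (measurable_const.indicator hE)).abs).aestronglyMeasurable)
    hbound (fun j => ae_of_all _ (hdom j)) hpt

theorem compactness_UR_general (n : ℕ) (R : ℝ) (hR : 0 < R)
    (Eh : ℕ → Set (En n)) (hEh : ∀ h, Eh h ∈ UR n R)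
    (M : ℝ) (hbd : ∀ h, Eh h ⊆ ball 0 M) :
    ∃ E ∈ UR n R, ∃ φ : ℕ → ℕ, StrictMono φ ∧
      KConv (fun j => Eh (φ j)) E ∧ L1Conv (fun j => Eh (φ j)) E := by
  have hEhK : ∀ h, Eh h ⊆ closedBall 0 M := fun h => (hbd h).trans ball_subset_closedBall
  obtain ⟨E, hE, hEK, φ, hφ, hlim, hfin⟩ :=
    exists_subseq_tendsto_hausdorffEDist (isCompact_closedBall 0 M) (fun h => (hEh h).1) hEhK
  have hK : KConv (fun j => Eh (φ j)) E := kConv_of_tendsto_hausdorffEDist hE hlim hfin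
  have hsc : ∀ j, sphereCond n R (Eh (φ j)) := fun j => (hEh (φ j)).2.2
  refine ⟨E, ⟨hE, isBounded_closedBall.subset hEK, hK.sphereCond_of_forall hE hsc⟩,
    φ, hφ, hK, ?_⟩
  refine l1Conv_of_ae_eventually_mem_iff (fun j => (hEh (φ j)).1.measurableSet) hE.measurableSet
    measurableSet_closedBall measure_closedBall_lt_top.ne (fun j => hEhK (φ j)) hEK ?_
  filter_upwards [measure_eq_zero_iff_ae_notMem.1
    (addHaar_exteriorContactSet volume hE.measurableSet hR)] with x hx
  exact hK.eventually_mem_iff hsc hx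

theorem compactness_UR (n : ℕ) (hn : 2 ≤ n) (R : ℝ) (hR : 0 < R)
    (Eh : ℕ → Set (En n)) (hEh : ∀ h, Eh h ∈ UR n R)
    (M : ℝ) (hM : 0 < M) (hbd : ∀ h, Eh h ⊆ ball 0 M) :
    ∃ E ∈ UR n R, ∃ φ : ℕ → ℕ, StrictMono φ ∧
      KConv (fun j => Eh (φ j)) E ∧ L1Conv (fun j => Eh (φ j)) E :=
  compactness_UR_general n R hR Eh hEh M hbd
end
end

section
/- Let R > 0 and E ∈ 𝒰_R ⊆ ℝ², and assume 0 ∈ ∂E with B((0,−R), R) ⊆ E and B((0,R), R) ∩ E = ∅. Set C := (−√3·R/2, √3·R/2) × (−R, R). Then there is a function f : (−√3·R/2, √3·R/2) → ℝ such that ∂E ∩ C = {(x, f(x)) : |x| < √3·R/2} and E ∩ C = {(x, z) ∈ C : z ≤ f(x)}; moreover f is differentiable, f(0) = 0, |f(x)| ≤ R − √(R² − x²) and |f′(x)| ≤ |x|/√(R² − x²) for every x, and f′ is Lipschitz with a Lipschitz constant depending only on R (not on E or on the point). -/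
open Set Metric MeasureTheory Filter Topology ENNReal NNReal

noncomputable section

def mk2 (x z : ℝ) : En 2 := (WithLp.equiv 2 (Fin 2 → ℝ)).symm ![x, z]

/-!
At a boundary point `p` the interior and exterior tangent balls of radius `R` have disjoint
interiors, so they touch at `p` and define a normal `ν` of length `R`. Every boundary point `q` lies
outside both balls, which gives `|⟪q - p, ν⟫| ≤ ‖q - p‖² / 2`. Comparing the balls at `p` with the
two balls at the origin shows that over `|x| < √3 R / 2` the normal points upward, with vertical
component at least `√(R² - x²) > R / 2`. The inequality then forbids two boundary points on one
vertical line of the cylinder, while connectedness provides one, so the boundary is a graph of some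
`f`. Read at `q = (y, f y)`, the inequality says that `f` is differentiable at `x` with
`f' x = -ν₀ / ν₁` and `|f y - f x - f' x (y - x)| ≤ (4 / R) (y - x)²`; exchanging `x` and `y` makes
`f'` Lipschitz with constant `8 / R`.
-/

open RealInnerProductSpace

section Topology

variable {X : Type*} [TopologicalSpace X] {s t U : Set X} {p : X}

theorem IsPreconnected.inter_frontier_nonempty (hs : IsPreconnected s)
    (hst : (s ∩ t).Nonempty) (hsdt : (s \ t).Nonempty) : (s ∩ frontier t).Nonempty := by
  by_contra hfr
  have hcover : s ⊆ interior t ∪ (closure t)ᶜ := fun x hx => by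
    by_contra h
    simp only [mem_union, mem_compl_iff, not_or, not_not] at h
    exact hfr ⟨x, hx, h.2, h.1⟩
  obtain ⟨a, has, hat⟩ := hst
  obtain ⟨b, hbs, hbt⟩ := hsdt
  have ha : a ∈ interior t := (hcover has).resolve_right (not_not.2 (subset_closure hat))
  have hb : b ∈ (closure t)ᶜ := (hcover hbs).resolve_left fun h => hbt (interior_subset h)
  obtain ⟨x, -, hxi, hxc⟩ := hs _ _ isOpen_interior isClosed_closure.isOpen_compl hcover
    ⟨a, has, ha⟩ ⟨b, hbs, hb⟩
  exact hxc (interior_subset_closure hxi)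

theorem notMem_of_mem_frontier_of_subset (hU : IsOpen U) (hUt : U ⊆ t) (hp : p ∈ frontier t) :
    p ∉ U :=
  fun h => hp.2 (interior_maximal hUt hU h)

theorem notMem_of_mem_frontier_of_inter_eq_empty (hU : IsOpen U) (hUt : U ∩ t = ∅)
    (hp : p ∈ frontier t) : p ∉ U :=
  fun h => (mem_closure_iff.1 hp.1 U hU h).ne_empty hUt

theorem Continuous.exists_mem_uIcc_mem_frontier {γ : ℝ → X} (hγ : Continuous γ) {a b : ℝ}
    (ha : γ a ∈ t) (hb : γ b ∉ t) : ∃ z ∈ uIcc a b, γ z ∈ frontier t := by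
  obtain ⟨-, ⟨z, hz, rfl⟩, hfr⟩ :=
    (isPreconnected_uIcc.image _ hγ.continuousOn).inter_frontier_nonempty
    ⟨_, mem_image_of_mem _ left_mem_uIcc, ha⟩ ⟨_, mem_image_of_mem _ right_mem_uIcc, hb⟩
  exact ⟨z, hz, hfr⟩

end Topology

section BallNormal

variable {F : Type*} [NormedAddCommGroup F] [InnerProductSpace ℝ F]

structure IsBallNormal (E : Set F) (R : ℝ) (p ν : F) : Prop where
  norm_eq : ‖ν‖ = R
  ball_add_inter_eq_empty : ball (p + ν) R ∩ E = ∅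
  ball_sub_subset : ball (p - ν) R ⊆ E

theorem IsBallNormal.abs_inner_le {E : Set F} {R : ℝ} {p ν q : F} (hν : IsBallNormal E R p ν)
    (hq : q ∈ frontier E) : |⟪q - p, ν⟫| ≤ ‖q - p‖ ^ 2 / 2 := by
  have hR : 0 ≤ R := hν.norm_eq ▸ norm_nonneg ν
  have hadd : R ≤ ‖q - p - ν‖ := by
    refine not_lt.1 fun h => notMem_of_mem_frontier_of_inter_eq_empty isOpen_ball
      hν.ball_add_inter_eq_empty hq ?_
    rwa [mem_ball_iff_norm, ← sub_sub]
  have hsub : R ≤ ‖q - p + ν‖ := by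
    refine not_lt.1 fun h => notMem_of_mem_frontier_of_subset isOpen_ball hν.ball_sub_subset hq ?_
    rwa [mem_ball_iff_norm, ← sub_add]
  have hadd2 := pow_le_pow_left₀ hR hadd 2
  have hsub2 := pow_le_pow_left₀ hR hsub 2
  rw [norm_sub_sq_real, hν.norm_eq] at hadd2
  rw [norm_add_sq_real, hν.norm_eq] at hsub2
  rw [abs_le]
  constructor <;> linarith

theorem sphereCond.exists_isBallNormal {n : ℕ} {R : ℝ} {E : Set (En n)} (hE : sphereCond n R E)
    {p : En n} (hp : p ∈ frontier E) : ∃ ν, IsBallNormal E R p ν := by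
  obtain ⟨p', p'', hp', hp'', hint, hext⟩ := hE p hp
  rcases (hp' ▸ dist_nonneg : 0 ≤ R).eq_or_lt with rfl | hR
  · exact ⟨0, by simp, by simp, by simp⟩
  have hsep : dist p' p'' = 2 * R := by
    refine le_antisymm ?_ ?_
    · linarith [dist_triangle p' p p'', dist_comm p p']
    · have := (disjoint_ball_ball_iff hR hR).1
        ((disjoint_iff_inter_eq_empty.2 hext).mono_right hint).symm
      linarith
  have hmid : p = midpoint ℝ p' p'' :=
    eq_midpoint_of_dist_eq_half (by rw [dist_comm, hp', hsep]; ring) (by rw [hp'', hsep]; ring)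
  have hsym : p'' - p = p - p' := by rw [hmid, right_sub_midpoint, midpoint_sub_left]
  refine ⟨p'' - p, ?_, ?_, ?_⟩
  · rw [← dist_eq_norm, dist_comm, hp'']
  · rwa [add_sub_cancel]
  · rwa [hsym, sub_sub_cancel p p']

end BallNormal

section Plane

@[simp] theorem mk2_apply_zero (x z : ℝ) : mk2 x z 0 = x := rfl

@[simp] theorem mk2_apply_one (x z : ℝ) : mk2 x z 1 = z := rfl

theorem continuous_mk2 (x : ℝ) : Continuous (mk2 x) :=
  (PiLp.continuous_toLp 2 _).comp (by fun_prop)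

theorem inner_en2 (v w : En 2) : ⟪v, w⟫ = v 0 * w 0 + v 1 * w 1 := by
  simp only [PiLp.inner_apply, RCLike.inner_apply, Real.ringHom_apply, Fin.sum_univ_two,
    Fin.isValue]
  ring

theorem norm_sq_en2 (v : En 2) : ‖v‖ ^ 2 = v 0 ^ 2 + v 1 ^ 2 := by
  simp [EuclideanSpace.norm_sq_eq, Fin.sum_univ_two]

theorem mem_ball_en2 {v c : En 2} {r : ℝ} (hr : 0 ≤ r) :
    v ∈ ball c r ↔ (v 0 - c 0) ^ 2 + (v 1 - c 1) ^ 2 < r ^ 2 := by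
  rw [mem_ball_iff_norm, ← sq_lt_sq₀ (norm_nonneg _) hr, norm_sq_en2]
  rfl

theorem dist_sq_en2 (v w : En 2) : dist v w ^ 2 = (v 0 - w 0) ^ 2 + (v 1 - w 1) ^ 2 := by
  rw [dist_eq_norm, norm_sq_en2]
  rfl

end Plane

section CalculusLemmas

theorem hasDerivAt_of_abs_mul_add_mul_le {f : ℝ → ℝ} {x α β c : ℝ} (hc : 0 < c)
    (h : ∀ᶠ y in 𝓝 x, |(y - x) * α + (f y - f x) * β| ≤ ((y - x) ^ 2 + (f y - f x) ^ 2) / 2 ∧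
      |f y - f x| ≤ 2 * (β - c)) :
    HasDerivAt f (-α / β) x := by
  have hβ : 0 < β := by
    have := h.self_of_nhds.2
    rw [sub_self, abs_zero] at this
    linarith
  -- the bound `|f y - f x| ≤ 2 (β - c)` absorbs the quadratic term, leaving a linear bound
  have hlin : ∀ᶠ y in 𝓝 x, |f y - f x| ≤ (|α| + 1) / c * |y - x| := by
    filter_upwards [h, ball_mem_nhds x one_pos] with y ⟨hkey, hsmall⟩ hy
    rw [mem_ball, Real.dist_eq] at hy
    have htri : |f y - f x| * β ≤ |(y - x) * α + (f y - f x) * β| + |y - x| * |α| := by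
      have := abs_sub ((y - x) * α + (f y - f x) * β) ((y - x) * α)
      rwa [add_sub_cancel_left, abs_mul, abs_mul, abs_of_pos hβ] at this
    rw [div_mul_eq_mul_div, le_div_iff₀ hc]
    nlinarith [abs_nonneg (f y - f x), abs_nonneg (y - x), abs_nonneg α, sq_abs (f y - f x),
      sq_abs (y - x)]
  set K := (|α| + 1) / c
  have hquad : ∀ᶠ y in 𝓝 x,
      |f y - f x - (y - x) * (-α / β)| ≤ (1 + K ^ 2) / (2 * β) * (y - x) ^ 2 := by
    filter_upwards [h, hlin] with y ⟨hkey, _⟩ hy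
    have hsq : (f y - f x) ^ 2 ≤ K ^ 2 * (y - x) ^ 2 := by
      rw [← sq_abs (f y - f x), ← sq_abs (y - x), ← mul_pow]
      exact pow_le_pow_left₀ (abs_nonneg _) hy 2
    have hrem : f y - f x - (y - x) * (-α / β) = ((y - x) * α + (f y - f x) * β) / β := by
      field_simp
      ring
    rw [hrem, abs_div, abs_of_pos hβ, div_le_iff₀ hβ]
    calc _ ≤ ((y - x) ^ 2 + (f y - f x) ^ 2) / 2 := hkey
      _ ≤ (1 + K ^ 2) * (y - x) ^ 2 / 2 := by linarith
      _ = _ := by field_simp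
  rw [hasDerivAt_iff_isLittleO]
  refine (Asymptotics.IsBigO.of_bound ((1 + K ^ 2) / (2 * β)) ?_).trans_isLittleO
    (Asymptotics.isLittleO_pow_sub_sub x one_lt_two)
  filter_upwards [hquad] with y hy
  simpa [Real.norm_eq_abs, smul_eq_mul, mul_comm] using hy

theorem lipschitzOnWith_of_abs_sub_sub_mul_le {f g : ℝ → ℝ} {s : Set ℝ} {C : ℝ≥0}
    (h : ∀ x ∈ s, ∀ y ∈ s, |f y - f x - g x * (y - x)| ≤ C * (y - x) ^ 2) :
    LipschitzOnWith (2 * C) g s := by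
  refine LipschitzOnWith.of_dist_le_mul fun x hx y hy => ?_
  rw [Real.dist_eq, Real.dist_eq]
  rcases eq_or_ne x y with rfl | hne
  · simp
  have hxy : 0 < |x - y| := abs_pos.2 (sub_ne_zero.2 hne)
  have hsum : |g x - g y| * |x - y| ≤ 2 * C * |x - y| * |x - y| := by
    rw [← abs_mul, mul_assoc _ |x - y|, ← sq, sq_abs]
    calc |(g x - g y) * (x - y)|
        = |(f y - f x - g x * (y - x)) + (f x - f y - g y * (x - y))| := by congr 1; ring
      _ ≤ _ := abs_add_le _ _
      _ ≤ C * (y - x) ^ 2 + C * (x - y) ^ 2 := add_le_add (h x hx y hy) (h y hy x hx)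
      _ = _ := by ring
  push_cast
  exact le_of_mul_le_mul_right hsum hxy

end CalculusLemmas

section LocalGraph

def strip (R : ℝ) : Set ℝ := Ioo (-(√3 * R / 2)) (√3 * R / 2)

theorem isOpen_strip (R : ℝ) : IsOpen (strip R) := isOpen_Ioo

theorem convex_strip (R : ℝ) : Convex ℝ (strip R) := convex_Ioo _ _

variable {R x y z w : ℝ} {E : Set (En 2)} {ν : En 2} {f : ℝ → ℝ}

theorem pos_of_mem_strip (hx : x ∈ strip R) : 0 < R :=
  pos_of_mul_pos_right (by linarith [hx.1, hx.2]) (Real.sqrt_nonneg 3)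

theorem sq_lt_three_quarters_of_mem_strip (hx : x ∈ strip R) : x ^ 2 < 3 * R ^ 2 / 4 := by
  have h3 : √3 ^ 2 = 3 := Real.sq_sqrt (by norm_num)
  have hx' : |x| < √3 * R / 2 := abs_lt.2 hx
  nlinarith [abs_nonneg x, sq_abs x]

theorem sq_lt_of_mem_strip (hx : x ∈ strip R) : x ^ 2 < R ^ 2 := by
  nlinarith [sq_lt_three_quarters_of_mem_strip hx]

theorem half_lt_sqrt_of_mem_strip (hx : x ∈ strip R) : R / 2 < √(R ^ 2 - x ^ 2) :=
  (Real.lt_sqrt (by linarith [pos_of_mem_strip hx])).2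
    (by nlinarith [sq_lt_three_quarters_of_mem_strip hx])

theorem abs_le_of_mem_frontier (hlow : ball (mk2 0 (-R)) R ⊆ E)
    (hhigh : ball (mk2 0 R) R ∩ E = ∅) (hp : mk2 x z ∈ frontier E) (hz : z ∈ Ioo (-R) R) :
    |z| ≤ R - √(R ^ 2 - x ^ 2) := by
  have hR : 0 ≤ R := by linarith [hz.1, hz.2]
  have hhi := notMem_of_mem_frontier_of_inter_eq_empty isOpen_ball hhigh hp
  have hlo := notMem_of_mem_frontier_of_subset isOpen_ball hlow hp
  rw [mem_ball_en2 hR] at hhi hlo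
  simp only [mk2_apply_zero, mk2_apply_one, not_lt] at hhi hlo
  have h₁ : √(R ^ 2 - x ^ 2) ≤ R - z := (Real.sqrt_le_left (by linarith [hz.2])).2 (by nlinarith)
  have h₂ : √(R ^ 2 - x ^ 2) ≤ z + R := (Real.sqrt_le_left (by linarith [hz.1])).2 (by nlinarith)
  exact abs_le.2 ⟨by linarith, by linarith⟩

theorem mem_Ioo_of_mem_frontier (hlow : ball (mk2 0 (-R)) R ⊆ E)
    (hhigh : ball (mk2 0 R) R ∩ E = ∅) (hx : x ^ 2 < R ^ 2) (hp : mk2 x z ∈ frontier E)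
    (hz : z ∈ Icc (-R) R) : z ∈ Ioo (-R) R := by
  have hR : 0 ≤ R := by linarith [hz.1, hz.2]
  refine ⟨hz.1.lt_of_ne ?_, hz.2.lt_of_ne ?_⟩
  · rintro rfl
    exact notMem_of_mem_frontier_of_subset isOpen_ball hlow hp ((mem_ball_en2 hR).2 (by simpa))
  · rintro rfl
    exact notMem_of_mem_frontier_of_inter_eq_empty isOpen_ball hhigh hp
      ((mem_ball_en2 hR).2 (by simpa))

theorem IsBallNormal.abs_mul_add_mul_le (hν : IsBallNormal E R (mk2 x z) ν)
    (hq : mk2 y w ∈ frontier E) :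
    |(y - x) * ν 0 + (w - z) * ν 1| ≤ ((y - x) ^ 2 + (w - z) ^ 2) / 2 := by
  simpa [inner_en2, norm_sq_en2] using hν.abs_inner_le hq

theorem IsBallNormal.sqrt_le_apply_one (hlow : ball (mk2 0 (-R)) R ⊆ E)
    (hhigh : ball (mk2 0 R) R ∩ E = ∅) (hν : IsBallNormal E R (mk2 x z) ν)
    (hp : mk2 x z ∈ frontier E) (hz : z ∈ Ioo (-R) R) (hx : x ^ 2 ≤ R ^ 2) :
    √(R ^ 2 - x ^ 2) ≤ ν 1 := by
  have hR : 0 < R := by linarith [hz.1, hz.2]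
  set q := √(R ^ 2 - x ^ 2)
  have hq : q ^ 2 = R ^ 2 - x ^ 2 := Real.sq_sqrt (by linarith)
  have hzq := abs_le_of_mem_frontier hlow hhigh hp hz
  have hz2 : z ^ 2 ≤ (R - q) ^ 2 := sq_le_sq' (abs_le.1 hzq).1 (abs_le.1 hzq).2
  have hν2 : ν 0 ^ 2 + ν 1 ^ 2 = R ^ 2 := by rw [← norm_sq_en2, hν.norm_eq]
  have hbelow : R + R ≤ dist (mk2 0 (-R)) (mk2 x z + ν) := (disjoint_ball_ball_iff hR hR).1
    ((disjoint_iff_inter_eq_empty.2 hν.ball_add_inter_eq_empty).mono_right hlow).symm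
  have habove : R + R ≤ dist (mk2 x z - ν) (mk2 0 R) := (disjoint_ball_ball_iff hR hR).1
    ((disjoint_iff_inter_eq_empty.2 hhigh).mono_right hν.ball_sub_subset).symm
  have h₁ := pow_le_pow_left₀ (by linarith) hbelow 2
  have h₂ := pow_le_pow_left₀ (by linarith) habove 2
  rw [dist_sq_en2] at h₁ h₂
  simp only [PiLp.add_apply, PiLp.sub_apply, mk2_apply_zero, mk2_apply_one] at h₁ h₂
  -- sum `h₁ + h₂`, then use `‖ν‖ = R` and `z ^ 2 ≤ (R - q) ^ 2`
  have key : R * q ≤ R * ν 1 := by nlinarith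
  exact le_of_mul_le_mul_left key hR

theorem IsBallNormal.sq_apply_zero_le (hlow : ball (mk2 0 (-R)) R ⊆ E)
    (hhigh : ball (mk2 0 R) R ∩ E = ∅) (hν : IsBallNormal E R (mk2 x z) ν)
    (hp : mk2 x z ∈ frontier E) (hz : z ∈ Ioo (-R) R) (hx : x ^ 2 ≤ R ^ 2) :
    ν 0 ^ 2 ≤ x ^ 2 := by
  have hβ := hν.sqrt_le_apply_one hlow hhigh hp hz hx
  have hq : √(R ^ 2 - x ^ 2) ^ 2 = R ^ 2 - x ^ 2 := Real.sq_sqrt (by linarith)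
  have hν2 : ν 0 ^ 2 + ν 1 ^ 2 = R ^ 2 := by rw [← norm_sq_en2, hν.norm_eq]
  nlinarith [Real.sqrt_nonneg (R ^ 2 - x ^ 2)]

theorem mk2_neg_mem_of_mem_strip (hlow : ball (mk2 0 (-R)) R ⊆ E) (hx : x ∈ strip R) :
    mk2 x (-R) ∈ E :=
  hlow ((mem_ball_en2 (pos_of_mem_strip hx).le).2 (by simpa using sq_lt_of_mem_strip hx))

theorem mk2_notMem_of_mem_strip (hhigh : ball (mk2 0 R) R ∩ E = ∅) (hx : x ∈ strip R) :
    mk2 x R ∉ E :=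
  fun h => eq_empty_iff_forall_notMem.1 hhigh _
    ⟨(mem_ball_en2 (pos_of_mem_strip hx).le).2 (by simpa using sq_lt_of_mem_strip hx), h⟩

theorem exists_mem_frontier_of_mem_strip (hlow : ball (mk2 0 (-R)) R ⊆ E)
    (hhigh : ball (mk2 0 R) R ∩ E = ∅) (hx : x ∈ strip R) :
    ∃ z ∈ Ioo (-R) R, mk2 x z ∈ frontier E := by
  obtain ⟨z, hz, hfr⟩ :=
    (continuous_mk2 x).exists_mem_uIcc_mem_frontier (mk2_neg_mem_of_mem_strip hlow hx)
    (mk2_notMem_of_mem_strip hhigh hx)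
  rw [uIcc_of_le (by linarith [pos_of_mem_strip hx])] at hz
  exact ⟨z, mem_Ioo_of_mem_frontier hlow hhigh (sq_lt_of_mem_strip hx) hfr hz, hfr⟩

theorem eq_of_mem_frontier (hsph : sphereCond 2 R E) (hlow : ball (mk2 0 (-R)) R ⊆ E)
    (hhigh : ball (mk2 0 R) R ∩ E = ∅) (hx : x ∈ strip R) (hz : z ∈ Ioo (-R) R)
    (hw : w ∈ Ioo (-R) R) (hpz : mk2 x z ∈ frontier E) (hpw : mk2 x w ∈ frontier E) : z = w := by
  obtain ⟨ν, hν⟩ := hsph.exists_isBallNormal hpz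
  have hq := half_lt_sqrt_of_mem_strip hx
  have hβ := hν.sqrt_le_apply_one hlow hhigh hpz hz (sq_lt_of_mem_strip hx).le
  have hkey := hν.abs_mul_add_mul_le hpw
  rw [sub_self, zero_mul, zero_add, zero_pow two_ne_zero, zero_add, abs_mul,
    abs_of_pos (show 0 < ν 1 by linarith [pos_of_mem_strip hx]), ← sq_abs] at hkey
  -- `|w - z| ≤ |w| + |z| ≤ 2 (R - q) < R < 2 q ≤ 2 ν₁` with `q = √(R ^ 2 - x ^ 2)`
  have hsep : |w - z| < 2 * ν 1 := by
    linarith [abs_sub w z, abs_le_of_mem_frontier hlow hhigh hpz hz,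
      abs_le_of_mem_frontier hlow hhigh hpw hw]
  have hzero : |w - z| ≤ 0 := by nlinarith [abs_nonneg (w - z)]
  linarith [abs_nonpos_iff.1 hzero]

theorem mem_iff_le_of_mem_frontier (hEc : IsClosed E) (hsph : sphereCond 2 R E)
    (hlow : ball (mk2 0 (-R)) R ⊆ E) (hhigh : ball (mk2 0 R) R ∩ E = ∅) (hx : x ∈ strip R)
    (hw : w ∈ Ioo (-R) R) (hpw : mk2 x w ∈ frontier E) (hz : z ∈ Ioo (-R) R) :
    mk2 x z ∈ E ↔ z ≤ w := by
  have hx2 := sq_lt_of_mem_strip hx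
  constructor
  · intro hzE
    by_contra! hwz
    obtain ⟨u, hu, hpu⟩ :=
      (continuous_mk2 x).exists_mem_uIcc_mem_frontier hzE (mk2_notMem_of_mem_strip hhigh hx)
    rw [uIcc_of_le hz.2.le] at hu
    have huw := eq_of_mem_frontier hsph hlow hhigh hx
      (mem_Ioo_of_mem_frontier hlow hhigh hx2 hpu ⟨by linarith [hz.1, hu.1], hu.2⟩) hw hpu hpw
    linarith [hu.1]
  · intro hzw
    by_contra hzE
    obtain ⟨u, hu, hpu⟩ :=
      (continuous_mk2 x).exists_mem_uIcc_mem_frontier (mk2_neg_mem_of_mem_strip hlow hx) hzE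
    rw [uIcc_of_le hz.1.le] at hu
    have huw := eq_of_mem_frontier hsph hlow hhigh hx
      (mem_Ioo_of_mem_frontier hlow hhigh hx2 hpu ⟨hu.1, by linarith [hz.2, hu.2]⟩) hw hpu hpw
    obtain rfl : z = w := le_antisymm hzw (huw ▸ hu.2)
    exact hzE (hEc.frontier_subset hpw)

theorem frontier_inter_eq_graph (hsph : sphereCond 2 R E) (hlow : ball (mk2 0 (-R)) R ⊆ E)
    (hhigh : ball (mk2 0 R) R ∩ E = ∅)
    (hf : ∀ x ∈ strip R, f x ∈ Ioo (-R) R ∧ mk2 x (f x) ∈ frontier E) :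
    frontier E ∩ {p | ∃ x ∈ strip R, ∃ z ∈ Ioo (-R) R, p = mk2 x z} =
      {p | ∃ x ∈ strip R, p = mk2 x (f x)} := by
  ext p
  constructor
  · rintro ⟨hp, x, hx, z, hz, rfl⟩
    rw [eq_of_mem_frontier hsph hlow hhigh hx hz (hf x hx).1 hp (hf x hx).2]
    exact ⟨x, hx, rfl⟩
  · rintro ⟨x, hx, rfl⟩
    exact ⟨(hf x hx).2, x, hx, f x, (hf x hx).1, rfl⟩

theorem inter_eq_subgraph (hEc : IsClosed E) (hsph : sphereCond 2 R E)
    (hlow : ball (mk2 0 (-R)) R ⊆ E) (hhigh : ball (mk2 0 R) R ∩ E = ∅)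
    (hf : ∀ x ∈ strip R, f x ∈ Ioo (-R) R ∧ mk2 x (f x) ∈ frontier E) :
    E ∩ {p | ∃ x ∈ strip R, ∃ z ∈ Ioo (-R) R, p = mk2 x z} =
      {p | ∃ x ∈ strip R, ∃ z ∈ Ioo (-R) R, z ≤ f x ∧ p = mk2 x z} := by
  ext p
  constructor
  · rintro ⟨hp, x, hx, z, hz, rfl⟩
    exact ⟨x, hx, z, hz, (mem_iff_le_of_mem_frontier hEc hsph hlow hhigh hx (hf x hx).1
      (hf x hx).2 hz).1 hp, rfl⟩
  · rintro ⟨x, hx, z, hz, hle, rfl⟩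
    exact ⟨(mem_iff_le_of_mem_frontier hEc hsph hlow hhigh hx (hf x hx).1 (hf x hx).2 hz).2 hle,
      x, hx, z, hz, rfl⟩

theorem hasDerivAt_of_isBallNormal (hlow : ball (mk2 0 (-R)) R ⊆ E)
    (hhigh : ball (mk2 0 R) R ∩ E = ∅)
    (hf : ∀ x ∈ strip R, f x ∈ Ioo (-R) R ∧ mk2 x (f x) ∈ frontier E) (hx : x ∈ strip R)
    (hν : IsBallNormal E R (mk2 x (f x)) ν) : HasDerivAt f (-ν 0 / ν 1) x := by
  have hβ := hν.sqrt_le_apply_one hlow hhigh (hf x hx).2 (hf x hx).1 (sq_lt_of_mem_strip hx).le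
  have hq := half_lt_sqrt_of_mem_strip hx
  -- `|f y - f x| < R / 2 + (R - √(R ^ 2 - x ^ 2))`, which is `2 (ν 1 - c)` for this `c`
  refine hasDerivAt_of_abs_mul_add_mul_le (c := ν 1 - (3 * R / 2 - √(R ^ 2 - x ^ 2)) / 2)
    (by linarith) ?_
  filter_upwards [(isOpen_strip R).mem_nhds hx] with y hy
  refine ⟨hν.abs_mul_add_mul_le (hf y hy).2, ?_⟩
  linarith [abs_sub (f y) (f x), abs_le_of_mem_frontier hlow hhigh (hf x hx).2 (hf x hx).1,
    abs_le_of_mem_frontier hlow hhigh (hf y hy).2 (hf y hy).1, half_lt_sqrt_of_mem_strip hy]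

theorem differentiableAt_of_mem_strip (hsph : sphereCond 2 R E) (hlow : ball (mk2 0 (-R)) R ⊆ E)
    (hhigh : ball (mk2 0 R) R ∩ E = ∅)
    (hf : ∀ x ∈ strip R, f x ∈ Ioo (-R) R ∧ mk2 x (f x) ∈ frontier E) (hx : x ∈ strip R) :
    DifferentiableAt ℝ f x :=
  have ⟨_, hν⟩ := hsph.exists_isBallNormal (hf x hx).2
  (hasDerivAt_of_isBallNormal hlow hhigh hf hx hν).differentiableAt

theorem abs_deriv_le (hsph : sphereCond 2 R E) (hlow : ball (mk2 0 (-R)) R ⊆ E)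
    (hhigh : ball (mk2 0 R) R ∩ E = ∅)
    (hf : ∀ x ∈ strip R, f x ∈ Ioo (-R) R ∧ mk2 x (f x) ∈ frontier E) (hx : x ∈ strip R) :
    |deriv f x| ≤ |x| / √(R ^ 2 - x ^ 2) := by
  obtain ⟨ν, hν⟩ := hsph.exists_isBallNormal (hf x hx).2
  have hx2 := (sq_lt_of_mem_strip hx).le
  have hq := half_lt_sqrt_of_mem_strip hx
  have hβ := hν.sqrt_le_apply_one hlow hhigh (hf x hx).2 (hf x hx).1 hx2
  have hα := hν.sq_apply_zero_le hlow hhigh (hf x hx).2 (hf x hx).1 hx2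
  have hR := pos_of_mem_strip hx
  rw [(hasDerivAt_of_isBallNormal hlow hhigh hf hx hν).deriv, abs_div, abs_neg,
    abs_of_pos (by linarith : 0 < ν 1)]
  exact div_le_div₀ (abs_nonneg x) (sq_le_sq.1 hα) (by linarith) hβ

theorem abs_sub_le_sqrt_three_mul (hsph : sphereCond 2 R E) (hlow : ball (mk2 0 (-R)) R ⊆ E)
    (hhigh : ball (mk2 0 R) R ∩ E = ∅)
    (hf : ∀ x ∈ strip R, f x ∈ Ioo (-R) R ∧ mk2 x (f x) ∈ frontier E) (hx : x ∈ strip R)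
    (hy : y ∈ strip R) : |f y - f x| ≤ √3 * |y - x| := by
  refine (convex_strip R).norm_image_sub_le_of_norm_deriv_le
    (fun z hz => differentiableAt_of_mem_strip hsph hlow hhigh hf hz) (fun z hz => ?_) hx hy
  have hq := half_lt_sqrt_of_mem_strip hz
  have hR := pos_of_mem_strip hz
  refine (abs_deriv_le hsph hlow hhigh hf hz).trans ((div_le_iff₀ (by linarith)).2 ?_)
  nlinarith [abs_lt.2 hz, Real.sqrt_nonneg 3]

theorem abs_sub_sub_deriv_mul_le (hsph : sphereCond 2 R E) (hlow : ball (mk2 0 (-R)) R ⊆ E)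
    (hhigh : ball (mk2 0 R) R ∩ E = ∅)
    (hf : ∀ x ∈ strip R, f x ∈ Ioo (-R) R ∧ mk2 x (f x) ∈ frontier E) (hx : x ∈ strip R)
    (hy : y ∈ strip R) : |f y - f x - deriv f x * (y - x)| ≤ 4 / R * (y - x) ^ 2 := by
  obtain ⟨ν, hν⟩ := hsph.exists_isBallNormal (hf x hx).2
  have hR := pos_of_mem_strip hx
  have hβ : R / 2 < ν 1 := (half_lt_sqrt_of_mem_strip hx).trans_le
    (hν.sqrt_le_apply_one hlow hhigh (hf x hx).2 (hf x hx).1 (sq_lt_of_mem_strip hx).le)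
  have hβ0 : 0 < ν 1 := by linarith
  have hkey := hν.abs_mul_add_mul_le (hf y hy).2
  have hlip : (f y - f x) ^ 2 ≤ 3 * (y - x) ^ 2 := by
    have h3 : √3 ^ 2 = 3 := Real.sq_sqrt (by norm_num)
    rw [← sq_abs (f y - f x), ← sq_abs (y - x), ← h3, ← mul_pow]
    exact pow_le_pow_left₀ (abs_nonneg _) (abs_sub_le_sqrt_three_mul hsph hlow hhigh hf hx hy) 2
  have hrem : f y - f x - -ν 0 / ν 1 * (y - x) = ((y - x) * ν 0 + (f y - f x) * ν 1) / ν 1 := by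
    field_simp
    ring
  have hβR : 2 ≤ 4 / R * ν 1 := by
    rw [div_mul_eq_mul_div, le_div_iff₀ hR]
    linarith
  rw [(hasDerivAt_of_isBallNormal hlow hhigh hf hx hν).deriv, hrem, abs_div, abs_of_pos hβ0,
    div_le_iff₀ hβ0]
  nlinarith [sq_nonneg (y - x)]

end LocalGraph

theorem local_graph_2d (R : ℝ) (hR : 0 < R) :
    ∃ L : ℝ≥0, 0 < L ∧ ∀ E ∈ UR 2 R,
      mk2 0 0 ∈ frontier E → ball (mk2 0 (-R)) R ⊆ E → ball (mk2 0 R) R ∩ E = ∅ →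
      ∃ f : ℝ → ℝ,
        frontier E ∩ {p | ∃ x ∈ Ioo (-(Real.sqrt 3 * R / 2)) (Real.sqrt 3 * R / 2),
            ∃ z ∈ Ioo (-R) R, p = mk2 x z}
          = {p | ∃ x ∈ Ioo (-(Real.sqrt 3 * R / 2)) (Real.sqrt 3 * R / 2), p = mk2 x (f x)} ∧
        E ∩ {p | ∃ x ∈ Ioo (-(Real.sqrt 3 * R / 2)) (Real.sqrt 3 * R / 2),
            ∃ z ∈ Ioo (-R) R, p = mk2 x z}
          = {p | ∃ x ∈ Ioo (-(Real.sqrt 3 * R / 2)) (Real.sqrt 3 * R / 2),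
              ∃ z ∈ Ioo (-R) R, z ≤ f x ∧ p = mk2 x z} ∧
        f 0 = 0 ∧
        (∀ x ∈ Ioo (-(Real.sqrt 3 * R / 2)) (Real.sqrt 3 * R / 2), DifferentiableAt ℝ f x) ∧
        (∀ x ∈ Ioo (-(Real.sqrt 3 * R / 2)) (Real.sqrt 3 * R / 2),
          |f x| ≤ R - Real.sqrt (R ^ 2 - x ^ 2)) ∧
        (∀ x ∈ Ioo (-(Real.sqrt 3 * R / 2)) (Real.sqrt 3 * R / 2),
          |deriv f x| ≤ |x| / Real.sqrt (R ^ 2 - x ^ 2)) ∧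
        LipschitzOnWith L (deriv f) (Ioo (-(Real.sqrt 3 * R / 2)) (Real.sqrt 3 * R / 2)) := by
  refine ⟨2 * (4 / R).toNNReal, mul_pos two_pos (Real.toNNReal_pos.2 (by positivity)), ?_⟩
  rintro E ⟨hEc, -, hsph⟩ h0 hlow hhigh
  choose! f hf using fun x (hx : x ∈ strip R) => exists_mem_frontier_of_mem_strip hlow hhigh hx
  have h0S : (0 : ℝ) ∈ strip R := ⟨neg_lt_zero.2 (by positivity), by positivity⟩
  have hf0 : f 0 = 0 :=
    eq_of_mem_frontier hsph hlow hhigh h0S (hf 0 h0S).1 ⟨by linarith, hR⟩ (hf 0 h0S).2 h0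
  have hlip : LipschitzOnWith (2 * (4 / R).toNNReal) (deriv f) (strip R) := by
    refine lipschitzOnWith_of_abs_sub_sub_mul_le (f := f) fun x hx y hy => ?_
    rw [Real.coe_toNNReal _ (by positivity)]
    exact abs_sub_sub_deriv_mul_le hsph hlow hhigh hf hx hy
  exact ⟨f, frontier_inter_eq_graph hsph hlow hhigh hf, inter_eq_subgraph hEc hsph hlow hhigh hf,
    hf0, fun x hx => differentiableAt_of_mem_strip hsph hlow hhigh hf hx,
    fun x hx => abs_le_of_mem_frontier hlow hhigh (hf x hx).2 (hf x hx).1,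
    fun x hx => abs_deriv_le hsph hlow hhigh hf hx, hlip⟩
end
end

section
/- Let R > 0 and E ∈ 𝒰_R ⊆ ℝ², and assume 0 ∈ ∂E with B((0,−R), R) ⊆ E and B((0,R), R) ∩ E = ∅. Let p̄ = (x̄, ȳ) ∈ ∂E with 0 ≤ x̄ < √3·R/2 and |ȳ| < R, and let p̄′, p̄′′ be admissible centers for p̄ (B(p̄′,R) ⊆ E, B(p̄′′,R) ∩ E = ∅, |p̄ − p̄′| = |p̄ − p̄′′| = R). Then the second component of the unit vector ν := (p̄′′ − p̄′)/(2R) satisfies |ν₂| ≥ √(R² − x̄²)/R; equivalently, the angle α ∈ [0, π) between the x-axis and the common tangent line at p̄ to B(p̄′,R) and B(p̄′′,R) satisfies |cos α| ≥ √(R² − x̄²)/R. -/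
open Set Metric MeasureTheory Filter Topology ENNReal NNReal

noncomputable section

lemma dist_sq_two (q r : En 2) : dist q r ^ 2 = (q 0 - r 0)^2 + (q 1 - r 1)^2 := by
  rw [EuclideanSpace.dist_eq, Real.sq_sqrt (by positivity)]
  simp [Fin.sum_univ_two, Real.dist_eq, sq_abs]

lemma two_le_dist_of_disj {c₁ c₂ : En 2} {R : ℝ}
    (h : ∀ z, z ∈ ball c₁ R → z ∉ ball c₂ R) : 2 * R ≤ dist c₁ c₂ := by
  by_contra hlt
  push_neg at hlt
  have hm := h (midpoint ℝ c₁ c₂)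
  rw [mem_ball, mem_ball, dist_midpoint_left, dist_midpoint_right] at hm
  simp only [Real.norm_ofNat] at hm
  exact hm (by linarith) (by linarith)

lemma main_ineq (R xb yb A B : ℝ) (hR : 0 < R) (hx0 : 0 ≤ xb) (hyl : -R < yb) (hyr : yb < R)
    (E1 : A^2 + B^2 = R^2)
    (E2 : 4*R^2 ≤ (xb - A)^2 + (yb - B - R)^2)
    (E3 : 4*R^2 ≤ (xb + A)^2 + (yb + B + R)^2)
    (E4 : R^2 ≤ xb^2 + (yb - R)^2)
    (E5 : R^2 ≤ xb^2 + (yb + R)^2) : R^2 - xb^2 ≤ B^2 := by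
  by_contra hcon
  push_neg at hcon
  have hx2 : xb^2 < A^2 := by linarith
  rcases le_total A 0 with hA0 | hA0
  · have hAx : xb < -A := by
      by_contra h'
      push_neg at h'
      have hm := mul_le_mul h' h' (neg_nonneg.mpr hA0) hx0
      nlinarith [hm, hx2]
    have hmul : xb * xb ≤ xb * (-A) := mul_le_mul_of_nonneg_left hAx.le hx0
    have hstep : (R + yb) * (R - yb) ≤ (R + yb) * B := by nlinarith [E3, E1, E4, hmul]
    have hBge : R - yb ≤ B := le_of_mul_le_mul_left hstep (by linarith)
    have hsq : (R - yb) * (R - yb) ≤ B * B :=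
      mul_self_le_mul_self (by linarith) hBge
    nlinarith [E4, hsq, hcon]
  · have hAx : xb < A := by
      by_contra h'
      push_neg at h'
      have hm := mul_le_mul h' h' hA0 hx0
      nlinarith [hm, hx2]
    have hmul : xb * xb ≤ xb * A := mul_le_mul_of_nonneg_left hAx.le hx0
    have hstep : (R - yb) * (R + yb) ≤ (R - yb) * B := by nlinarith [E2, E1, E5, hmul]
    have hBge : R + yb ≤ B := le_of_mul_le_mul_left hstep (by linarith)
    have hsq : (R + yb) * (R + yb) ≤ B * B :=
      mul_self_le_mul_self (by linarith) hBge
    nlinarith [E5, hsq, hcon]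

theorem normal_angle_bound (R : ℝ) (hR : 0 < R) (E : Set (En 2)) (hE : E ∈ UR 2 R)
    (h0 : mk2 0 0 ∈ frontier E)
    (hin : ball (mk2 0 (-R)) R ⊆ E) (hout : ball (mk2 0 R) R ∩ E = ∅)
    (xb yb : ℝ) (hx0 : 0 ≤ xb) (hx : xb < Real.sqrt 3 * R / 2) (hy : |yb| < R)
    (hp : mk2 xb yb ∈ frontier E)
    (p' p'' : En 2) (hd' : dist (mk2 xb yb) p' = R) (hd'' : dist (mk2 xb yb) p'' = R)
    (hball' : ball p' R ⊆ E) (hball'' : ball p'' R ∩ E = ∅) :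
    Real.sqrt (R ^ 2 - xb ^ 2) / R ≤ |((2 * R)⁻¹ • (p'' - p')) 1| := by
  obtain ⟨hyl, hyr⟩ := abs_lt.mp hy
  have hclosed : IsClosed E := hE.1
  -- pb is the midpoint of p', p''
  have hdisj : ∀ z, z ∈ ball p' R → z ∉ ball p'' R := fun z h1 h2 =>
    (Set.eq_empty_iff_forall_notMem.mp hball'' z) ⟨h2, hball' h1⟩
  have hpp : 2 * R ≤ dist p' p'' := two_le_dist_of_disj hdisj
  have key : p'' - mk2 xb yb = mk2 xb yb - p' := by
    set u := p'' - mk2 xb yb with hu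
    set w := mk2 xb yb - p' with hw
    have hnu : ‖u‖ = R := by rw [hu, ← dist_eq_norm, dist_comm]; exact hd''
    have hnw : ‖w‖ = R := by rw [hw, ← dist_eq_norm]; exact hd'
    have hsum : 2 * R ≤ ‖u + w‖ := by
      rw [hu, hw, sub_add_sub_cancel, ← dist_eq_norm, dist_comm]; exact hpp
    have h1 := norm_add_sq_real u w
    have h2 := norm_sub_sq_real u w
    have hle : ‖u + w‖ ^ 2 ≥ (2 * R) ^ 2 := by nlinarith [norm_nonneg (u + w)]
    have hz : ‖u - w‖ ^ 2 ≤ 0 := by nlinarith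
    have : ‖u - w‖ = 0 :=
      le_antisymm (by nlinarith [norm_nonneg (u - w)]) (norm_nonneg _)
    exact norm_sub_eq_zero_iff.mp this
  -- coordinates
  set A : ℝ := xb - p' 0 with hA
  set B : ℝ := yb - p' 1 with hB
  have hp0 : p' 0 = xb - A := by rw [hA]; ring
  have hp1 : p' 1 = yb - B := by rw [hB]; ring
  have hq0 : p'' 0 = xb + A := by
    have := congrArg (fun q : En 2 => q 0) key
    simp only [PiLp.sub_apply] at this
    have h1 : mk2 xb yb 0 = xb := rfl
    rw [h1] at this; rw [hA]; linarith
  have hq1 : p'' 1 = yb + B := by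
    have := congrArg (fun q : En 2 => q 1) key
    simp only [PiLp.sub_apply] at this
    have h1 : mk2 xb yb 1 = yb := rfl
    rw [h1] at this; rw [hB]; linarith
  -- polynomial facts
  have E1 : A ^ 2 + B ^ 2 = R ^ 2 := by
    have := dist_sq_two (mk2 xb yb) p'
    rw [hd'] at this
    have h1 : mk2 xb yb 0 = xb := rfl
    have h2 : mk2 xb yb 1 = yb := rfl
    rw [h1, h2, hp0, hp1] at this
    linarith [this]
  have sq_of_dist : ∀ (c : En 2) (q : En 2), 2 * R ≤ dist q c →
      4 * R ^ 2 ≤ (q 0 - c 0) ^ 2 + (q 1 - c 1) ^ 2 := by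
    intro c q h
    have h2 := pow_le_pow_left₀ (by linarith : (0:ℝ) ≤ 2 * R) h 2
    have h3 := dist_sq_two q c
    nlinarith [h2, h3]
  have E2 : 4 * R ^ 2 ≤ (xb - A) ^ 2 + (yb - B - R) ^ 2 := by
    have hdisj2 : ∀ z, z ∈ ball p' R → z ∉ ball (mk2 0 R) R := fun z h1 h2 =>
      (Set.eq_empty_iff_forall_notMem.mp hout z) ⟨h2, hball' h1⟩
    have h := sq_of_dist (mk2 0 R) p' (two_le_dist_of_disj hdisj2)
    have h1 : mk2 0 R 0 = (0:ℝ) := rfl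
    have h2 : mk2 0 R 1 = R := rfl
    rw [h1, h2, hp0, hp1] at h
    linarith [h]
  have E3 : 4 * R ^ 2 ≤ (xb + A) ^ 2 + (yb + B + R) ^ 2 := by
    have hdisj3 : ∀ z, z ∈ ball p'' R → z ∉ ball (mk2 0 (-R)) R := fun z h1 h2 =>
      (Set.eq_empty_iff_forall_notMem.mp hball'' z) ⟨h1, hin h2⟩
    have h := sq_of_dist (mk2 0 (-R)) p'' (two_le_dist_of_disj hdisj3)
    have h1 : mk2 0 (-R) 0 = (0:ℝ) := rfl
    have h2 : mk2 0 (-R) 1 = -R := rfl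
    rw [h1, h2, hq0, hq1] at h
    linarith [h]
  have E4 : R ^ 2 ≤ xb ^ 2 + (yb - R) ^ 2 := by
    have hmem : mk2 xb yb ∈ E := by
      rw [← hclosed.closure_eq]; exact frontier_subset_closure hp
    have hnb : mk2 xb yb ∉ ball (mk2 0 R) R := fun h =>
      (Set.eq_empty_iff_forall_notMem.mp hout (mk2 xb yb)) ⟨h, hmem⟩
    rw [mem_ball, not_lt] at hnb
    have h := dist_sq_two (mk2 xb yb) (mk2 0 R)
    have h1 : mk2 xb yb 0 = xb := rfl
    have h2 : mk2 xb yb 1 = yb := rfl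
    have h3 : mk2 0 R 0 = (0:ℝ) := rfl
    have h4 : mk2 0 R 1 = R := rfl
    rw [h1, h2, h3, h4] at h
    have h5 := pow_le_pow_left₀ hR.le hnb 2
    linarith [h, h5]
  have E5 : R ^ 2 ≤ xb ^ 2 + (yb + R) ^ 2 := by
    have hnint : mk2 xb yb ∉ interior E := by
      exact fun h => hp.2 h
    have hnb : mk2 xb yb ∉ ball (mk2 0 (-R)) R := fun h =>
      hnint (interior_maximal hin isOpen_ball h)
    rw [mem_ball, not_lt] at hnb
    have h := dist_sq_two (mk2 xb yb) (mk2 0 (-R))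
    have h1 : mk2 xb yb 0 = xb := rfl
    have h2 : mk2 xb yb 1 = yb := rfl
    have h3 : mk2 0 (-R) 0 = (0:ℝ) := rfl
    have h4 : mk2 0 (-R) 1 = -R := rfl
    rw [h1, h2, h3, h4] at h
    have h5 := pow_le_pow_left₀ hR.le hnb 2
    linarith [h, h5]
  -- main inequality
  have hmain : R ^ 2 - xb ^ 2 ≤ B ^ 2 := by
    have := main_ineq R xb yb A B hR hx0 hyl hyr (by linarith [E1]) (by linarith [E2])
      (by linarith [E3]) (by linarith [E4]) (by linarith [E5])
    linarith
  -- conclude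
  have hval : ((2 * R)⁻¹ • (p'' - p')) 1 = B / R := by
    have : ((2 * R)⁻¹ • (p'' - p')) 1 = (2 * R)⁻¹ * (p'' 1 - p' 1) := by simp
    rw [this, hq1, hp1]
    field_simp
    ring
  rw [hval, abs_div, abs_of_pos hR]
  have hs : Real.sqrt (R ^ 2 - xb ^ 2) ≤ |B| := by
    have := Real.sqrt_le_sqrt hmain
    rwa [Real.sqrt_sq_eq_abs] at this
  exact (div_le_div_iff_of_pos_right hR).mpr hs
end
end

section
/- Let R > 0 and E ∈ 𝒰_R ⊆ ℝ², and assume 0 ∈ ∂E with B((0,−R), R) ⊆ E and B((0,R), R) ∩ E = ∅. Let p̄ = (x̄, ȳ) ∈ ∂E with 0 ≤ x̄ < √3·R/2 and |ȳ| < R, with admissible centers p̄′, p̄′′. Then either B(p̄′, R) or B(p̄′′, R) contains the whole vertical segment {(x̄, y) : ȳ < y ≤ R − √(R² − x̄²)}. -/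
open Set Metric MeasureTheory Filter Topology ENNReal NNReal

noncomputable section

lemma dist_mk2 (a b c d : ℝ) :
    dist (mk2 a b) (mk2 c d) = Real.sqrt ((a - c) ^ 2 + (b - d) ^ 2) := by
  rw [EuclideanSpace.dist_eq]
  congr 1
  simp [mk2, Fin.sum_univ_two, Real.dist_eq, sq_abs]

lemma mk2_self (q : En 2) : mk2 (q 0) (q 1) = q := by
  ext i
  fin_cases i <;> rfl

lemma two_le_of_disj {q₁ q₂ : En 2} {R : ℝ}
    (h : ball q₁ R ∩ ball q₂ R = ∅) : 2 * R ≤ dist q₁ q₂ := by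
  by_contra hlt
  push_neg at hlt
  have hm : midpoint ℝ q₁ q₂ ∈ ball q₁ R ∩ ball q₂ R := by
    constructor
    · rw [mem_ball, dist_comm, dist_left_midpoint (𝕜 := ℝ), Real.norm_two]
      linarith
    · rw [mem_ball, dist_comm, dist_right_midpoint (𝕜 := ℝ), Real.norm_two]
      linarith
  rw [h] at hm
  exact hm

set_option maxHeartbeats 1000000 in
theorem segment_in_admissible_ball (R : ℝ) (hR : 0 < R) (E : Set (En 2)) (hE : E ∈ UR 2 R)
    (h0 : mk2 0 0 ∈ frontier E)
    (hin : ball (mk2 0 (-R)) R ⊆ E) (hout : ball (mk2 0 R) R ∩ E = ∅)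
    (xb yb : ℝ) (hx0 : 0 ≤ xb) (hx : xb < Real.sqrt 3 * R / 2) (hy : |yb| < R)
    (hp : mk2 xb yb ∈ frontier E)
    (p' p'' : En 2) (hd' : dist (mk2 xb yb) p' = R) (hd'' : dist (mk2 xb yb) p'' = R)
    (hball' : ball p' R ⊆ E) (hball'' : ball p'' R ∩ E = ∅) :
    (∀ y : ℝ, yb < y → y ≤ R - Real.sqrt (R ^ 2 - xb ^ 2) → mk2 xb y ∈ ball p' R) ∨
    (∀ y : ℝ, yb < y → y ≤ R - Real.sqrt (R ^ 2 - xb ^ 2) → mk2 xb y ∈ ball p'' R) := by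
  right
  obtain ⟨u, v, rfl⟩ : ∃ u v, p' = mk2 u v := ⟨p' 0, p' 1, (mk2_self p').symm⟩
  obtain ⟨w, z, rfl⟩ : ∃ w z, p'' = mk2 w z := ⟨p'' 0, p'' 1, (mk2_self p'').symm⟩
  obtain ⟨hybl, hybu⟩ := abs_lt.mp hy
  have hout' := Set.eq_empty_iff_forall_notMem.mp hout
  have hpp'' := Set.eq_empty_iff_forall_notMem.mp hball''
  -- x̄ bounds
  have h3 : Real.sqrt 3 < 2 := by
    rw [show (2:ℝ) = Real.sqrt 4 by rw [show (4:ℝ) = 2^2 by norm_num, Real.sqrt_sq]; norm_num]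
    exact Real.sqrt_lt_sqrt (by norm_num) (by norm_num)
  have hx2 : xb ^ 2 < 3 * R ^ 2 / 4 := by
    nlinarith [Real.sq_sqrt (show (0:ℝ) ≤ 3 by norm_num), Real.sqrt_nonneg 3]
  -- s
  set s := Real.sqrt (R ^ 2 - xb ^ 2) with hs_def
  have hs2 : s ^ 2 = R ^ 2 - xb ^ 2 := Real.sq_sqrt (by nlinarith)
  clear_value s
  have hs0 : 0 ≤ s := hs_def ▸ Real.sqrt_nonneg _
  have hs_half : R / 2 < s := by nlinarith
  -- squared distance equalities
  rw [dist_mk2] at hd' hd''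
  have hA : (xb - u) ^ 2 + (yb - v) ^ 2 = R ^ 2 := by
    have h := Real.sq_sqrt (show (0:ℝ) ≤ (xb - u) ^ 2 + (yb - v) ^ 2 by positivity)
    rw [hd'] at h; linarith
  have hB : (xb - w) ^ 2 + (yb - z) ^ 2 = R ^ 2 := by
    have h := Real.sq_sqrt (show (0:ℝ) ≤ (xb - w) ^ 2 + (yb - z) ^ 2 by positivity)
    rw [hd''] at h; linarith
  -- disjointness facts
  have hC : (2 * R) ^ 2 ≤ (u - w) ^ 2 + (v - z) ^ 2 := by
    have hdisj : ball (mk2 u v) R ∩ ball (mk2 w z) R = ∅ := by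
      rw [Set.eq_empty_iff_forall_notMem]
      exact fun x ⟨ha, hb⟩ => hpp'' x ⟨hb, hball' ha⟩
    have h := two_le_of_disj hdisj
    rw [dist_mk2] at h
    exact (Real.le_sqrt (by positivity) (by positivity)).mp h
  have hD : (2 * R) ^ 2 ≤ (u - 0) ^ 2 + (v - R) ^ 2 := by
    have hdisj : ball (mk2 u v) R ∩ ball (mk2 0 R) R = ∅ := by
      rw [Set.eq_empty_iff_forall_notMem]
      exact fun x ⟨ha, hb⟩ => hout' x ⟨hb, hball' ha⟩
    have h := two_le_of_disj hdisj
    rw [dist_mk2] at h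
    exact (Real.le_sqrt (by positivity) (by positivity)).mp h
  have hE2 : (2 * R) ^ 2 ≤ (w - 0) ^ 2 + (z - (-R)) ^ 2 := by
    have hdisj : ball (mk2 w z) R ∩ ball (mk2 0 (-R)) R = ∅ := by
      rw [Set.eq_empty_iff_forall_notMem]
      exact fun x ⟨ha, hb⟩ => hpp'' x ⟨ha, hin hb⟩
    have h := two_le_of_disj hdisj
    rw [dist_mk2] at h
    exact (Real.le_sqrt (by positivity) (by positivity)).mp h
  -- p̄ not in the lower ball
  have hF : R ^ 2 ≤ (xb - 0) ^ 2 + (yb - (-R)) ^ 2 := by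
    have hsub : ball (mk2 0 (-R)) R ⊆ interior E := interior_maximal hin isOpen_ball
    have hnotint : mk2 xb yb ∉ interior E := hp.2
    have hnot : mk2 xb yb ∉ ball (mk2 0 (-R)) R := fun h => hnotint (hsub h)
    rw [mem_ball, dist_mk2, not_lt] at hnot
    exact (Real.le_sqrt hR.le (by positivity)).mp hnot
  clear hball' hball'' hin hout hout' hpp'' hp h0 hE hd' hd'' hy hx
  have hyF : s - R ≤ yb := by
    by_contra hc
    push_neg at hc
    have h1 : yb + R < s := by linarith
    nlinarith [hF]
  -- antipodality: w = 2xb - u, z = 2yb - v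
  have hkey : (u + w - 2 * xb) ^ 2 + (v + z - 2 * yb) ^ 2 ≤ 0 := by
    have hid : (u + w - 2 * xb) ^ 2 + (v + z - 2 * yb) ^ 2 =
        2 * ((xb - u) ^ 2 + (yb - v) ^ 2) + 2 * ((xb - w) ^ 2 + (yb - z) ^ 2) -
          ((u - w) ^ 2 + (v - z) ^ 2) := by ring
    rw [hid, hA, hB]
    linarith
  have hw1 : (u + w - 2 * xb) ^ 2 = 0 :=
    le_antisymm (by linarith [sq_nonneg (v + z - 2 * yb)]) (sq_nonneg _)
  have hz1 : (v + z - 2 * yb) ^ 2 = 0 :=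
    le_antisymm (by linarith [sq_nonneg (u + w - 2 * xb)]) (sq_nonneg _)
  have hw : w = 2 * xb - u := by
    have := pow_eq_zero_iff (n := 2) (by norm_num) |>.mp hw1
    linarith
  have hz : z = 2 * yb - v := by
    have := pow_eq_zero_iff (n := 2) (by norm_num) |>.mp hz1
    linarith
  clear hw1 hz1 hkey hB hC
  subst hw hz
  -- normal bound: 2Rv ≤ 2Ryb + xb² + yb² - 2R²
  have hv : 2 * R * v ≤ 2 * R * yb + xb ^ 2 + yb ^ 2 - 2 * R ^ 2 := by nlinarith [hA, hD, hE2]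
  intro y hy1 hy2
  rw [mem_ball, dist_mk2, Real.sqrt_lt' hR]
  have hyb_s : 0 < yb + s := by linarith
  have hyb_s' : 0 < s + R - yb := by linarith
  have hprod : (yb + s) * (yb - s - R) < 0 := mul_neg_of_pos_of_neg hyb_s (by linarith)
  have hRy : R * y ≤ R * (R - s) := mul_le_mul_of_nonneg_left hy2 hR.le
  have hmain : R * (y - 3 * yb + 2 * v) < 0 := by nlinarith [hv, hRy, hprod, hs2]
  have hlin : y - 3 * yb + 2 * v < 0 := by
    by_contra hcon
    push_neg at hcon
    nlinarith [mul_nonneg hR.le hcon]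
  have hmul : (y - yb) * (y - 3 * yb + 2 * v) < 0 :=
    mul_neg_of_pos_of_neg (by linarith) hlin
  nlinarith [hA, hmul]
end
end

section
/- Let R > 0. Every nonempty connected set E ∈ 𝒰_R ⊆ ℝⁿ satisfies 𝓛ⁿ(E) ≥ m · 𝓛ⁿ(B(0,R)), where m is the integer part of diam(E)/(4R). Consequently, if {E_h} is a sequence of connected sets in 𝒰_R with diam(E_h) → ∞, then 𝓛ⁿ(E_h) → ∞. -/
/-!
Every point `x` of `E` lies within `R` of the centre of a ball of radius `R` inside `E`: at a
boundary point `p` nearest to `x`, at distance `d`, the interior and exterior balls are antipodal,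
so `p` is the midpoint of their centres; the exterior ball misses `B(x, d) ⊆ E`, and Apollonius's
theorem then puts `x` within `R - d` of the interior centre. If `m = ⌊diam E / 4R⌋ ≥ 1`, pick
`a, b ∈ E` with `dist a b ≥ 4R(m - 1)`; by connectedness there are `x_k ∈ E` with
`dist a x_k = 4Rk` for `k < m`. They are `4R` apart, so their interior balls are disjoint.
-/

open Set Metric MeasureTheory Filter Topology ENNReal NNReal

noncomputable section

lemma dist_le_sub_of_dist_midpoint {F : Type*} [NormedAddCommGroup F] [InnerProductSpace ℝ F]
    {x p' p'' : F} {d R : ℝ} (hdR : d ≤ R) (hp : dist p' p'' = 2 * R)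
    (hx : dist x (midpoint ℝ p' p'') = d) (hx'' : d + R ≤ dist x p'') :
    dist x p' ≤ R - d := by
  have apollonius :=
    EuclideanGeometry.dist_sq_add_dist_sq_eq_two_mul_dist_midpoint_sq_add_half_dist_sq x p' p''
  rw [hx, hp] at apollonius
  have hd : 0 ≤ d := hx ▸ dist_nonneg
  have hx''sq : (d + R) ^ 2 ≤ dist x p'' ^ 2 := pow_le_pow_left₀ (by linarith) hx'' 2
  have hsq : dist x p' ^ 2 ≤ (R - d) ^ 2 := by nlinarith
  exact (pow_le_pow_iff_left₀ dist_nonneg (by linarith) two_ne_zero).1 hsq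

lemma exists_ball_subset_of_mem {n : ℕ} {R : ℝ} (hR : 0 < R) {E : Set (En n)}
    (hE : sphereCond n R E) {x : En n} (hx : x ∈ E) :
    ∃ c, dist x c ≤ R ∧ ball c R ⊆ E := by
  rcases eq_or_ne E univ with rfl | hne
  · exact ⟨x, by simp [hR.le], subset_univ _⟩
  obtain ⟨p, hpE, hxp⟩ := exists_mem_frontier_infDist_compl_eq_dist hx hne
  set d := infDist x Eᶜ
  rcases le_or_gt R d with hRd | hdR
  · exact ⟨x, by simp [hR.le], (ball_subset_ball hRd).trans ball_infDist_compl_subset⟩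
  obtain ⟨p', p'', hp', hp'', hin, hout⟩ := hE p hpE
  have hout' : Disjoint E (ball p'' R) := by
    rw [disjoint_iff_inter_eq_empty, inter_comm, hout]
  have hp'p'' : dist p' p'' = 2 * R := by
    have hsep := (disjoint_ball_ball_iff hR hR).1 (hout'.mono_left hin)
    linarith [dist_triangle_left p' p'' p]
  have hmid : p = midpoint ℝ p' p'' :=
    eq_midpoint_of_dist_eq_half (by rw [dist_comm, hp', hp'p'']; ring)
      (by rw [hp'', hp'p'']; ring)
  have hx'' : d + R ≤ dist x p'' :=
    (disjoint_closedBall_ball_iff infDist_nonneg hR).1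
      ((hout'.closure_left isOpen_ball).mono_left (closedBall_infDist_compl_subset_closure hx))
  refine ⟨p', ?_, hin⟩
  have := dist_le_sub_of_dist_midpoint hdR.le hp'p'' (by rw [← hmid, hxp]) hx''
  linarith [infDist_nonneg (x := x) (s := Eᶜ)]

lemma card_mul_measure_ball_le_of_pairwise_dist {F ι : Type*} [NormedAddCommGroup F]
    [MeasurableSpace F] [BorelSpace F] (μ : Measure F) [μ.IsAddHaarMeasure] {R : ℝ} {E : Set F}
    (s : Finset ι)
    (c : ι → F) (hsep : (s : Set ι).Pairwise fun j k => R + R ≤ dist (c j) (c k))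
    (hsub : ∀ k ∈ s, ball (c k) R ⊆ E) :
    (s.card : ℝ≥0∞) * μ (ball 0 R) ≤ μ E :=
  calc (s.card : ℝ≥0∞) * μ (ball 0 R) = ∑ k ∈ s, μ (ball (c k) R) := by
        simp [Measure.addHaar_ball_center]
    _ = μ (⋃ k ∈ s, ball (c k) R) :=
        (measure_biUnion_finset (fun _ hj _ hk hjk => ball_disjoint_ball (hsep hj hk hjk))
          fun _ _ => measurableSet_ball).symm
    _ ≤ μ E := measure_mono (iUnion₂_subset hsub)

lemma nat_mul_volume_ball_le_of_dist_le {n : ℕ} {R : ℝ} (hR : 0 < R) {E : Set (En n)}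
    (hE : sphereCond n R E) (hconn : IsPreconnected E) {a b : En n} (ha : a ∈ E) (hb : b ∈ E)
    (m : ℕ) (hab : 4 * R * (m - 1) ≤ dist a b) :
    (m : ℝ≥0∞) * volume (ball (0 : En n) R) ≤ volume E := by
  have hpts : ∀ k : Fin m, ∃ x ∈ E, dist a x = 4 * R * k := fun k => by
    have hk : (k : ℝ) + 1 ≤ m := by exact_mod_cast k.isLt
    refine hconn.intermediate_value ha hb (continuous_const.dist continuous_id).continuousOn
      ⟨?_, ?_⟩ <;> simp only [dist_self, id] <;> nlinarith
  choose x hxE hxa using hpts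
  choose c hxc hcE using fun k => exists_ball_subset_of_mem hR hE (hxE k)
  have hsep : Pairwise fun j k : Fin m => R + R ≤ dist (c j) (c k) := by
    intro j k hjk
    have hjk' : (1 : ℝ) ≤ |(j : ℝ) - k| := by
      exact_mod_cast (Int.one_le_abs (sub_ne_zero.2 (by exact_mod_cast Fin.val_ne_of_ne hjk)) :
        (1 : ℤ) ≤ |(j : ℤ) - k|)
    have hx : 4 * R ≤ dist (x j) (x k) := by
      have := abs_dist_sub_le (x j) (x k) a
      rw [dist_comm (x j), dist_comm (x k), hxa, hxa, ← mul_sub, abs_mul,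
        abs_of_pos (by positivity : 0 < 4 * R)] at this
      nlinarith
    linarith [dist_triangle4 (x j) (c j) (c k) (x k), hxc j, hxc k, dist_comm (c k) (x k)]
  simpa using card_mul_measure_ball_le_of_pairwise_dist volume Finset.univ c
    (fun j _ k _ hjk => hsep hjk) fun k _ => hcE k

lemma floor_diam_div_mul_volume_ball_le {n : ℕ} {R : ℝ} (hR : 0 < R) {E : Set (En n)}
    (hE : sphereCond n R E) (hconn : IsPreconnected E) :
    (⌊diam E / (4 * R)⌋₊ : ℝ≥0∞) * volume (ball (0 : En n) R) ≤ volume E := by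
  set m := ⌊diam E / (4 * R)⌋₊
  rcases Nat.eq_zero_or_pos m with hm | hm
  · simp [hm]
  have hdiam : 4 * R * m ≤ diam E := by
    have := Nat.floor_le (a := diam E / (4 * R)) (by positivity)
    rwa [le_div_iff₀ (by positivity), mul_comm] at this
  have hm1 : (1 : ℝ) ≤ m := by exact_mod_cast hm
  obtain ⟨a, ha, b, hb, hab⟩ : ∃ a ∈ E, ∃ b ∈ E, 4 * R * (m - 1) < dist a b := by
    by_contra! h
    linarith [diam_le_of_forall_dist_le (by nlinarith) h]
  exact nat_mul_volume_ball_le_of_dist_le hR hE hconn ha hb m hab.le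

theorem volume_lower_bound_of_diam_general (n : ℕ) (R : ℝ) (hR : 0 < R) :
    (∀ E ∈ UR n R, E.Nonempty → IsPreconnected E →
      (⌊Metric.diam E / (4 * R)⌋₊ : ℝ≥0∞) * volume (ball (0 : En n) R) ≤ volume E) ∧
    (∀ Eh : ℕ → Set (En n), (∀ h, Eh h ∈ UR n R) → (∀ h, (Eh h).Nonempty) →
      (∀ h, IsPreconnected (Eh h)) →
      Tendsto (fun h => Metric.diam (Eh h)) atTop atTop →
      Tendsto (fun h => volume (Eh h)) atTop (𝓝 ⊤)) := by
  refine ⟨fun E hE _ hconn => floor_diam_div_mul_volume_ball_le hR hE.2.2 hconn, ?_⟩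
  intro Eh hUR _ hconn hdiam
  have hfloor : Tendsto (fun h => (⌊diam (Eh h) / (4 * R)⌋₊ : ℝ≥0∞)) atTop (𝓝 ⊤) :=
    tendsto_nat_nhds_top.comp (tendsto_nat_floor_atTop.comp (hdiam.atTop_div_const (by positivity)))
  have hball : volume (ball (0 : En n) R) ≠ 0 := (measure_ball_pos volume 0 hR).ne'
  have hlower := ENNReal.Tendsto.mul_const (b := volume (ball (0 : En n) R)) hfloor
    (Or.inl top_ne_zero)
  rw [top_mul hball] at hlower
  exact tendsto_nhds_top_mono hlower (Eventually.of_forall fun h =>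
    floor_diam_div_mul_volume_ball_le hR (hUR h).2.2 (hconn h))

theorem volume_lower_bound_of_diam (n : ℕ) (hn : 2 ≤ n) (R : ℝ) (hR : 0 < R) :
    (∀ E ∈ UR n R, E.Nonempty → IsPreconnected E →
      (⌊Metric.diam E / (4 * R)⌋₊ : ℝ≥0∞) * volume (ball (0 : En n) R) ≤ volume E) ∧
    (∀ Eh : ℕ → Set (En n), (∀ h, Eh h ∈ UR n R) → (∀ h, (Eh h).Nonempty) →
      (∀ h, IsPreconnected (Eh h)) →
      Tendsto (fun h => Metric.diam (Eh h)) atTop atTop →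
      Tendsto (fun h => volume (Eh h)) atTop (𝓝 ⊤)) :=
  volume_lower_bound_of_diam_general n R hR
end
end

section
/- Let R > 0 and let E_h, E ∈ 𝒰_R ⊆ ℝⁿ with E_h → E in L¹. Then the sequence {E_h} is equibounded: there exists M > 0 such that E_h ⊆ B(0, M) for every h. -/
open Set Metric MeasureTheory Filter Topology ENNReal NNReal

noncomputable section

/-!
A far point of a set in `𝒰_R` forces a whole ball of radius `R` far out inside it: the point of
maximal norm lies on the boundary, and its interior ball stays within distance `R`. Far from the
bounded limit set this ball lies in the symmetric difference, so the `L¹` distance would be at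
least the volume of a ball of radius `R`. Hence all but finitely many `E_h` lie in a fixed ball.
-/

open scoped symmDiff

theorem integral_abs_indicator_one_sub_indicator_one {α : Type*} [MeasurableSpace α]
    {μ : Measure α} {s t : Set α} (hs : MeasurableSet s) (ht : MeasurableSet t) :
    ∫ x, |s.indicator (fun _ => (1 : ℝ)) x - t.indicator (fun _ => (1 : ℝ)) x| ∂μ =
      μ.real (s ∆ t) := by
  simp_rw [← abs_indicator_symmDiff, abs_of_nonneg (indicator_nonneg (fun _ _ => zero_le_one) _)]
  exact integral_indicator_one (hs.symmDiff ht)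

theorem mem_frontier_of_isMaxOn_norm {E : Type*} [NormedAddCommGroup E] [NormedSpace ℝ E]
    {F : Set E} {p : E} (hpF : p ∈ F) (hmax : IsMaxOn norm F p) (hp : p ≠ 0) :
    p ∈ frontier F := by
  have hF : F ⊆ closedBall 0 ‖p‖ := fun y hy => mem_closedBall_zero_iff.2 (hmax hy)
  refine ⟨subset_closure hpF, fun hint => ?_⟩
  have := interior_mono hF hint
  rw [interior_closedBall _ (norm_ne_zero_iff.2 hp), mem_ball_zero_iff] at this
  exact lt_irrefl _ this

theorem Bornology.isBounded_iUnion_of_eventually_subset {α : Type*} [Bornology α]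
    {F : ℕ → Set α} {S : Set α} (hF : ∀ h, Bornology.IsBounded (F h))
    (hS : Bornology.IsBounded S) (hev : ∀ᶠ h in atTop, F h ⊆ S) :
    Bornology.IsBounded (⋃ h, F h) := by
  obtain ⟨N, hN⟩ := eventually_atTop.1 hev
  refine (((Bornology.isBounded_biUnion (finite_Iio N)).2 fun h _ => hF h).union hS).subset ?_
  refine iUnion_subset fun h => ?_
  rcases lt_or_ge h N with hh | hh
  · exact subset_union_of_subset_left (subset_biUnion_of_mem (u := F) (mem_Iio.2 hh)) _
  · exact subset_union_of_subset_right (hN h hh) _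

section

variable {n : ℕ} {R : ℝ}

theorem isCompact_of_mem_UR {F : Set (En n)} (hF : F ∈ UR n R) : IsCompact F :=
  isCompact_of_isClosed_isBounded hF.1 hF.2.1

theorem exists_ball_subset_of_mem_UR {F : Set (En n)} (hF : F ∈ UR n R) {x : En n}
    (hx : x ∈ F) (hx0 : x ≠ 0) : ∃ c, ball c R ⊆ F ∧ ‖x‖ - R ≤ ‖c‖ := by
  obtain ⟨p, hpF, hmax⟩ :=
    (isCompact_of_mem_UR hF).exists_isMaxOn ⟨x, hx⟩ continuous_norm.continuousOn
  have hxp : ‖x‖ ≤ ‖p‖ := hmax hx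
  have hp0 : p ≠ 0 := norm_pos_iff.1 ((norm_pos_iff.2 hx0).trans_le hxp)
  obtain ⟨c, -, hpc, -, hball, -⟩ := hF.2.2 p (mem_frontier_of_isMaxOn_norm hpF hmax hp0)
  refine ⟨c, hball, ?_⟩
  have := norm_sub_norm_le p c
  rw [← dist_eq_norm, hpc] at this
  linarith

theorem measureReal_ball_le_symmDiff_of_mem_UR {F E : Set (En n)} (hF : F ∈ UR n R) {M : ℝ}
    (hE : E ⊆ ball 0 M) (hR : 0 ≤ R) (hM : 0 ≤ M) {x : En n} (hx : x ∈ F)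
    (hfar : M + 2 * R < ‖x‖) : volume.real (ball (0 : En n) R) ≤ volume.real (F ∆ E) := by
  have hx0 : x ≠ 0 := norm_pos_iff.1 (by linarith)
  obtain ⟨c, hcF, hc⟩ := exists_ball_subset_of_mem_UR hF hx hx0
  have hdisj : Disjoint (ball c R) (ball 0 M) :=
    ball_disjoint_ball (by rw [dist_zero_right]; linarith)
  have hsub : ball c R ⊆ F ∆ E := fun y hy =>
    Or.inl ⟨hcF hy, fun hyE => hdisj.notMem_of_mem_left hy (hE hyE)⟩
  have hfin : volume (F ∆ E) ≠ ∞ :=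
    ((hF.2.1.union (isBounded_ball.subset hE)).subset symmDiff_subset_union).measure_lt_top.ne
  rw [measureReal_def, ← Measure.addHaar_ball_center volume c R, ← measureReal_def]
  exact measureReal_mono hsub hfin

end

theorem L1_implies_equibounded_general (n : ℕ) (R : ℝ) (hR : 0 < R)
    (Eh : ℕ → Set (En n)) (hEh : ∀ h, Eh h ∈ UR n R)
    (E : Set (En n)) (hE : E ∈ UR n R) (hL1 : L1Conv Eh E) :
    ∃ M > 0, ∀ h, Eh h ⊆ ball 0 M := by
  obtain ⟨M₀, hM₀, hEM₀⟩ := hE.2.1.subset_ball_lt 0 0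
  have hvol : 0 < volume.real (ball (0 : En n) R) :=
    ENNReal.toReal_pos (measure_ball_pos volume 0 hR).ne' measure_ball_lt_top.ne
  have hsymm : Tendsto (fun h => volume.real (Eh h ∆ E)) atTop (𝓝 0) := by
    simpa only [L1Conv, integral_abs_indicator_one_sub_indicator_one (hEh _).1.measurableSet
      hE.1.measurableSet] using hL1
  have hev : ∀ᶠ h in atTop, Eh h ⊆ closedBall 0 (M₀ + 2 * R) := by
    filter_upwards [hsymm.eventually (gt_mem_nhds hvol)] with h hh x hx
    rw [mem_closedBall_zero_iff]
    by_contra! hfar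
    exact measureReal_ball_le_symmDiff_of_mem_UR (hEh h) hEM₀ hR.le hM₀.le hx hfar |>.not_gt hh
  obtain ⟨M, hM, hU⟩ := (Bornology.isBounded_iUnion_of_eventually_subset (fun h => (hEh h).2.1)
    isBounded_closedBall hev).subset_ball_lt 0 0
  exact ⟨M, hM, fun h => (subset_iUnion Eh h).trans hU⟩

theorem L1_implies_equibounded (n : ℕ) (hn : 2 ≤ n) (R : ℝ) (hR : 0 < R)
    (Eh : ℕ → Set (En n)) (hEh : ∀ h, Eh h ∈ UR n R)
    (E : Set (En n)) (hE : E ∈ UR n R) (hL1 : L1Conv Eh E) :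
    ∃ M > 0, ∀ h, Eh h ⊆ ball 0 M :=
  L1_implies_equibounded_general n R hR Eh hEh E hE hL1
end
end
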